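/- Let 𝒢 be a TVG with vertex set V of size n, let s ∈ V, and suppose some journey starting at s at time 0 visits every vertex within the lifetime. For vertices u,v and time t, let d^t_{uv} ∈ ℕ ∪ {∞} be the least δ such that some journey departs from u at or after time t and arrives at v at time t + δ, with d^t_{uu} = 0. Then the minimal arrival time of a covering journey from s at time 0 equals the minimum, over all orderings u_1, u_2, …, u_n of V with u_1 = s, of a_n, where a_1 = 0 and a_{i+1} = a_i + d^{a_i}_{u_i u_{i+1}} for 1 ≤ i < n. -/

import Mathlib

/-- A time-varying graph (TVG): an underlying simple graph together with a presence
function telling when each (directed rendering of an) edge is available; every edge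
takes one time step to cross. -/
structure TVG (V : Type) where
  G : SimpleGraph V
  avail : V → V → ℕ → Prop

namespace TVG

variable {V : Type}

/-- A step of a journey: traverse the edge from `x.1` to `x.2.1`, starting at time
`x.2.2` and arriving at time `x.2.2 + 1`. -/
abbrev Step (V : Type) := V × V × ℕ

/-- Consecutive steps of a journey: the next step starts where the previous one ended,
at a strictly later time (waiting in between is allowed). -/
def Linked (a b : Step V) : Prop := b.1 = a.2.1 ∧ a.2.2 + 1 ≤ b.2.2

/-- A journey: each step crosses an edge of the underlying graph that is available at
that time, and consecutive steps are linked. -/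
def IsJourney (𝒢 : TVG V) (J : List (Step V)) : Prop :=
  (∀ x ∈ J, 𝒢.G.Adj x.1 x.2.1 ∧ 𝒢.avail x.1 x.2.1 x.2.2) ∧ J.Chain' Linked

/-- The journey starts at vertex `u`. -/
def startsAt (J : List (Step V)) (u : V) : Prop := ∀ x ∈ J.head?, x.1 = u

/-- The journey departs at or after time `t`. -/
def departsAfter (J : List (Step V)) (t : ℕ) : Prop := ∀ x ∈ J.head?, t ≤ x.2.2

/-- Departure date of a journey started at time `t0`. -/
def departure (J : List (Step V)) (t0 : ℕ) : ℕ := (J.head?).elim t0 fun x => x.2.2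

/-- Arrival date of a journey started at time `t0`. -/
def arrival (J : List (Step V)) (t0 : ℕ) : ℕ := (J.getLast?).elim t0 fun x => x.2.2 + 1

/-- Final vertex of a journey started at vertex `s`. -/
def endAt (J : List (Step V)) (s : V) : V := (J.getLast?).elim s fun x => x.2.1

/-- The journey, started at `s`, visits (covers) vertex `v`. -/
def visits (J : List (Step V)) (s v : V) : Prop := v = s ∨ ∃ x ∈ J, x.2.1 = v

/-- A covering journey from `s` starting at time `0`: a journey that starts at `s`
and visits every vertex. -/
def IsCoveringFrom (𝒢 : TVG V) (J : List (Step V)) (s : V) : Prop :=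
  𝒢.IsJourney J ∧ startsAt J s ∧ ∀ v : V, visits J s v

/-- Class `R` (recurrent edges): connected underlying graph, lifetime `ℕ`, and every
edge is available at arbitrarily late times. -/
def ClassR (𝒢 : TVG V) : Prop :=
  𝒢.G.Connected ∧ ∀ u v, 𝒢.G.Adj u v → ∀ t, ∃ t', t < t' ∧ 𝒢.avail u v t'

/-- Class `B` (time-bounded recurrent edges): every edge is available at some time in
`[t, t + Δ)` for every `t`. -/
def ClassB (𝒢 : TVG V) (Δ : ℕ) : Prop :=
  𝒢.G.Connected ∧ ∀ u v, 𝒢.G.Adj u v → ∀ t, ∃ t', t ≤ t' ∧ t' < t + Δ ∧ 𝒢.avail u v t'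

/-- Class `P` (periodic edges): the presence function is periodic with period `p`. -/
def ClassP (𝒢 : TVG V) (p : ℕ) : Prop :=
  𝒢.G.Connected ∧ ∀ u v t, 𝒢.avail u v t ↔ 𝒢.avail u v (t + p)

/-- Presence function obtained by running the given (possibly time-dependent) edge
relations for the given durations, one block after another, starting at time `0`;
each block relation receives the local time within its block. -/
def schedAvail : List ((V → V → ℕ → Prop) × ℕ) → V → V → ℕ → Prop
  | [], _, _, _ => False
  | (r, d) :: rest, u, v, t => if t < d then r u v t else schedAvail rest u v (t - d)

end TVG

open TVG

/-- `fore 𝒢 t u v`: the least `δ` such that some journey departs from `u` at or after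
time `t` and arrives at `v` at time `t + δ`; `0` when `u = v`, `∞` if none exists. -/
noncomputable def fore {V : Type} (𝒢 : TVG V) (t : ℕ) (u v : V) : ℕ∞ :=
  letI := Classical.propDecidable (u = v)
  if u = v then 0 else
    sInf {x : ℕ∞ | ∃ δ : ℕ, x = (δ : ℕ∞) ∧ ∃ J : List (TVG.Step V), J ≠ [] ∧
      𝒢.IsJourney J ∧ startsAt J u ∧ departsAfter J t ∧
      endAt J u = v ∧ arrival J t = t + δ}

/-- One step of the dynamic program: from arrival time `a` at `u`, the arrival time
`a + d^a_{uv}` at `v` (propagating `∞`). -/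
noncomputable def stepTime {V : Type} (𝒢 : TVG V) (u v : V) (a : ℕ∞) : ℕ∞ :=
  WithTop.recTopCoe ⊤ (fun n => (n : ℕ∞) + fore 𝒢 n u v) a

/-- `chainTime 𝒢 u a l`: the arrival time obtained by starting at `u` at time `a` and
successively taking foremost journeys to the vertices of `l` in order. -/
noncomputable def chainTime {V : Type} (𝒢 : TVG V) : V → ℕ∞ → List V → ℕ∞
  | _, a, [] => a
  | u, a, v :: rest => chainTime 𝒢 v (stepTime 𝒢 u v a) rest

/-!
Write `Reaches u t v b` when some journey leaves `u` no earlier than `t` and stands at `v` by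
time `b`; the empty journey makes `Reaches u t u b` hold for `t ≤ b`, matching `d^t_{uu} = 0`.
Since ℕ∞ is well-ordered, the infimum defining `fore` is attained, so
`stepTime u v t ≤ b ↔ Reaches u t v b`, and `chainTime u t l ≤ b` says that the vertices of `l`
can be reached one after the other, the last by time `b`. Reachability is transitive and,
because waiting is allowed, monotone in both times. Hence journeys to the successive vertices
of an ordering concatenate into a covering journey arriving no later than its chain time.
Conversely, the chain time of the list of vertices entered by a journey is at most the
journey's arrival, and transitivity lets one shortcut any vertex of the list, so the same bound
holds for the sublist that keeps each vertex once.
-/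

namespace TVG

variable {V : Type}

@[simp]
lemma arrival_nil (t : ℕ) : arrival ([] : List (Step V)) t = t := rfl

@[simp]
lemma endAt_nil (u : V) : endAt ([] : List (Step V)) u = u := rfl

@[simp]
lemma arrival_cons (x : Step V) (J : List (Step V)) (t : ℕ) :
    arrival (x :: J) t = arrival J (x.2.2 + 1) := by
  unfold arrival
  rw [List.getLast?_cons]
  cases J.getLast? <;> rfl

@[simp]
lemma endAt_cons (x : Step V) (J : List (Step V)) (u : V) :
    endAt (x :: J) u = endAt J x.2.1 := by
  unfold endAt
  rw [List.getLast?_cons]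
  cases J.getLast? <;> rfl

lemma arrival_append (J₁ J₂ : List (Step V)) (t : ℕ) :
    arrival (J₁ ++ J₂) t = arrival J₂ (arrival J₁ t) := by
  induction J₁ generalizing t with
  | nil => rfl
  | cons x J₁ ih => simp [ih]

lemma endAt_append (J₁ J₂ : List (Step V)) (u : V) :
    endAt (J₁ ++ J₂) u = endAt J₂ (endAt J₁ u) := by
  induction J₁ generalizing u with
  | nil => rfl
  | cons x J₁ ih => simp [ih]

lemma arrival_mono (J : List (Step V)) {t t' : ℕ} (h : t ≤ t') : arrival J t ≤ arrival J t' := by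
  unfold arrival
  cases J.getLast? <;> simp [h]

lemma visits_iff_mem {J : List (Step V)} {u v : V} :
    visits J u v ↔ v ∈ u :: J.map (·.2.1) := by
  simp [visits]

lemma endAt_mem (J : List (Step V)) (u : V) : endAt J u ∈ u :: J.map (·.2.1) := by
  induction J generalizing u with
  | nil => simp
  | cons x J ih => simpa using Or.inr (ih x.2.1)

variable (𝒢 : TVG V)

lemma isJourney_iff {J : List (Step V)} :
    𝒢.IsJourney J ↔ (∀ x ∈ J, 𝒢.G.Adj x.1 x.2.1 ∧ 𝒢.avail x.1 x.2.1 x.2.2) ∧ J.IsChain Linked :=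
  Iff.rfl

def IsJourneyFrom (J : List (Step V)) (u : V) (t : ℕ) : Prop :=
  𝒢.IsJourney J ∧ startsAt J u ∧ departsAfter J t

@[simp]
lemma isJourneyFrom_nil (u : V) (t : ℕ) : 𝒢.IsJourneyFrom [] u t := by
  simp [IsJourneyFrom, isJourney_iff, startsAt, departsAfter]

lemma isJourneyFrom_cons {x : Step V} {J : List (Step V)} {u : V} {t : ℕ} :
    𝒢.IsJourneyFrom (x :: J) u t ↔
      (x.1 = u ∧ t ≤ x.2.2 ∧ 𝒢.G.Adj x.1 x.2.1 ∧ 𝒢.avail x.1 x.2.1 x.2.2) ∧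
        𝒢.IsJourneyFrom J x.2.1 (x.2.2 + 1) := by
  simp only [IsJourneyFrom, isJourney_iff, startsAt, departsAfter, Linked, List.isChain_cons,
    List.forall_mem_cons, List.head?_cons, Option.mem_def, Option.some.injEq, forall_eq']
  grind

lemma isJourneyFrom_append {J₁ J₂ : List (Step V)} {u : V} {t : ℕ} :
    𝒢.IsJourneyFrom (J₁ ++ J₂) u t ↔
      𝒢.IsJourneyFrom J₁ u t ∧ 𝒢.IsJourneyFrom J₂ (endAt J₁ u) (arrival J₁ t) := by
  induction J₁ generalizing u t with
  | nil => simp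
  | cons x J₁ ih => simp only [List.cons_append, isJourneyFrom_cons, ih, endAt_cons,
      arrival_cons, and_assoc]

variable {𝒢}

lemma IsJourneyFrom.mono {J : List (Step V)} {u : V} {t t' : ℕ} (hJ : 𝒢.IsJourneyFrom J u t)
    (h : t' ≤ t) : 𝒢.IsJourneyFrom J u t' :=
  ⟨hJ.1, hJ.2.1, fun x hx => h.trans (hJ.2.2 x hx)⟩

lemma IsJourneyFrom.le_arrival {J : List (Step V)} {u : V} {t : ℕ}
    (hJ : 𝒢.IsJourneyFrom J u t) : t ≤ arrival J t := by
  induction J generalizing u t with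
  | nil => simp
  | cons x J ih =>
    rw [isJourneyFrom_cons] at hJ
    have := ih hJ.2
    simp only [arrival_cons]
    omega

lemma IsCoveringFrom.isJourneyFrom {J : List (Step V)} {s : V} (hJ : 𝒢.IsCoveringFrom J s) :
    𝒢.IsJourneyFrom J s 0 :=
  ⟨hJ.1, hJ.2.1, fun _ _ => Nat.zero_le _⟩

variable (𝒢)

def Reaches (u : V) (t : ℕ) (v : V) (b : ℕ) : Prop :=
  ∃ J, 𝒢.IsJourneyFrom J u t ∧ endAt J u = v ∧ arrival J t ≤ b

variable {𝒢}

lemma reaches_self {u : V} {t b : ℕ} (h : t ≤ b) : 𝒢.Reaches u t u b :=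
  ⟨[], 𝒢.isJourneyFrom_nil u t, rfl, h⟩

lemma Reaches.le {u v : V} {t b : ℕ} (h : 𝒢.Reaches u t v b) : t ≤ b := by
  obtain ⟨J, hJ, -, hb⟩ := h
  exact hJ.le_arrival.trans hb

lemma Reaches.mono {u v : V} {t t' b b' : ℕ} (h : 𝒢.Reaches u t v b) (ht : t' ≤ t)
    (hb : b ≤ b') : 𝒢.Reaches u t' v b' := by
  obtain ⟨J, hJ, hend, harr⟩ := h
  exact ⟨J, hJ.mono ht, hend, (arrival_mono J ht).trans (harr.trans hb)⟩

lemma Reaches.trans {u v w : V} {t b c : ℕ} (h₁ : 𝒢.Reaches u t v b)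
    (h₂ : 𝒢.Reaches v b w c) : 𝒢.Reaches u t w c := by
  obtain ⟨J₁, hJ₁, rfl, harr₁⟩ := h₁
  obtain ⟨J₂, hJ₂, rfl, harr₂⟩ := h₂
  refine ⟨J₁ ++ J₂, (𝒢.isJourneyFrom_append).2 ⟨hJ₁, hJ₂.mono harr₁⟩, endAt_append _ _ _, ?_⟩
  rw [arrival_append]
  exact (arrival_mono J₂ harr₁).trans harr₂

lemma IsJourneyFrom.reaches {J : List (Step V)} {u : V} {t : ℕ} (hJ : 𝒢.IsJourneyFrom J u t) :
    𝒢.Reaches u t (endAt J u) (arrival J t) :=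
  ⟨J, hJ, rfl, le_rfl⟩

end TVG

open TVG

lemma List.exists_sublist_nodup_cons_subset {α : Type*} (a : α) (l : List α) :
    ∃ l', l'.Sublist l ∧ (a :: l').Nodup ∧ a :: l ⊆ a :: l' := by
  classical
  refine ⟨l.dedup.erase a, List.erase_sublist.trans (List.dedup_sublist l),
    List.nodup_cons.2 ⟨(List.nodup_dedup l).not_mem_erase, (List.nodup_dedup l).erase a⟩, ?_⟩
  intro w hw
  by_cases hwa : w = a <;> simp_all [List.mem_erase_of_ne]

lemma ENat.sInf_le_sInf_of_forall_coe_mem {A B : Set ℕ∞}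
    (h : ∀ b : ℕ, (b : ℕ∞) ∈ B → ∃ x ∈ A, x ≤ b) : sInf A ≤ sInf B := by
  refine le_sInf fun y hy => ?_
  induction y using ENat.recTopCoe with
  | top => exact le_top
  | coe b =>
    obtain ⟨x, hx, hxb⟩ := h b hy
    exact (sInf_le hx).trans hxb

lemma ENat.sInf_mem_of_ne_top {S : Set ℕ∞} (h : sInf S ≠ ⊤) : sInf S ∈ S :=
  csInf_mem (Set.nonempty_iff_ne_empty.2 fun hS => h (hS ▸ sInf_empty))

section ForemostTimes

variable {V : Type} {𝒢 : TVG V}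

lemma fore_self (t : ℕ) (u : V) : fore 𝒢 t u u = 0 := if_pos rfl

lemma stepTime_coe_le_iff {u v : V} {t b : ℕ} :
    stepTime 𝒢 u v t ≤ b ↔ 𝒢.Reaches u t v b := by
  change (t : ℕ∞) + fore 𝒢 t u v ≤ b ↔ _
  by_cases huv : u = v
  · subst huv
    rw [fore_self, add_zero, Nat.cast_le]
    exact ⟨reaches_self, Reaches.le⟩
  rw [fore, if_neg huv]
  constructor
  · intro h
    obtain ⟨δ, hδ, J, -, hJ, hs, hd, hend, harr⟩ := ENat.sInf_mem_of_ne_top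
      (WithTop.add_ne_top.1 (ne_top_of_le_ne_top (ENat.natCast_ne_top b) h)).2
    rw [hδ, ← Nat.cast_add, Nat.cast_le] at h
    exact ⟨J, ⟨hJ, hs, hd⟩, hend, harr ▸ h⟩
  · rintro ⟨J, hJ, hend, harr⟩
    have hne : J ≠ [] := by
      rintro rfl
      exact huv hend
    have ht := hJ.le_arrival
    calc (t : ℕ∞) + sInf _ ≤ t + (arrival J t - t : ℕ) := by
          gcongr
          exact sInf_le ⟨_, rfl, J, hne, hJ.1, hJ.2.1, hJ.2.2, hend, by omega⟩
      _ ≤ b := by exact_mod_cast (by omega : t + (arrival J t - t) ≤ b)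

lemma stepTime_mono (u v : V) {a a' : ℕ∞} (h : a ≤ a') :
    stepTime 𝒢 u v a ≤ stepTime 𝒢 u v a' := by
  induction a' using ENat.recTopCoe with
  | top => exact le_top
  | coe t' =>
    lift a to ℕ using ne_top_of_le_ne_top (ENat.natCast_ne_top t') h
    induction hb : stepTime 𝒢 u v t' using ENat.recTopCoe with
    | top => exact le_top
    | coe b =>
      exact stepTime_coe_le_iff.2 ((stepTime_coe_le_iff.1 hb.le).mono (by exact_mod_cast h) le_rfl)

lemma chainTime_mono (u : V) (l : List V) {a a' : ℕ∞} (h : a ≤ a') :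
    chainTime 𝒢 u a l ≤ chainTime 𝒢 u a' l := by
  induction l generalizing u a a' with
  | nil => exact h
  | cons v l ih => exact ih v (stepTime_mono u v h)

lemma chainTime_nil (u : V) (a : ℕ∞) : chainTime 𝒢 u a [] = a := rfl

lemma chainTime_top (u : V) (l : List V) : chainTime 𝒢 u ⊤ l = ⊤ := by
  induction l generalizing u with
  | nil => rfl
  | cons v l ih => exact ih v

lemma chainTime_cons_le_iff {u v : V} {l : List V} {t b : ℕ} :
    chainTime 𝒢 u t (v :: l) ≤ b ↔ ∃ t₂, 𝒢.Reaches u t v t₂ ∧ chainTime 𝒢 v t₂ l ≤ b := by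
  change chainTime 𝒢 v (stepTime 𝒢 u v t) l ≤ b ↔ _
  constructor
  · intro h
    induction ht₂ : stepTime 𝒢 u v t using ENat.recTopCoe with
    | top => simp [ht₂, chainTime_top] at h
    | coe t₂ => exact ⟨t₂, stepTime_coe_le_iff.1 ht₂.le, ht₂ ▸ h⟩
  · rintro ⟨t₂, hreach, hl⟩
    exact (chainTime_mono v l (stepTime_coe_le_iff.2 hreach)).trans hl

lemma chainTime_le_of_reaches {u v : V} {l : List V} {t t₂ b : ℕ} (h : 𝒢.Reaches u t v t₂)
    (hl : chainTime 𝒢 v t₂ l ≤ b) : chainTime 𝒢 u t l ≤ b := by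
  cases l with
  | nil =>
    rw [chainTime_nil, Nat.cast_le] at hl ⊢
    exact h.le.trans hl
  | cons w l =>
    obtain ⟨t₃, hw, hl⟩ := chainTime_cons_le_iff.1 hl
    exact chainTime_cons_le_iff.2 ⟨t₃, h.trans hw, hl⟩

lemma chainTime_le_of_sublist {u : V} {l₁ l₂ : List V} {t b : ℕ} (hsub : l₁.Sublist l₂)
    (h : chainTime 𝒢 u t l₂ ≤ b) : chainTime 𝒢 u t l₁ ≤ b := by
  induction hsub generalizing u t with
  | slnil => exact h
  | cons v _ ih =>
    obtain ⟨t₂, hv, hl⟩ := chainTime_cons_le_iff.1 h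
    exact chainTime_le_of_reaches hv (ih hl)
  | cons_cons v _ ih =>
    obtain ⟨t₂, hv, hl⟩ := chainTime_cons_le_iff.1 h
    exact chainTime_cons_le_iff.2 ⟨t₂, hv, ih hl⟩

lemma TVG.IsJourneyFrom.chainTime_map_le_arrival {J : List (Step V)} {u : V} {t : ℕ}
    (hJ : 𝒢.IsJourneyFrom J u t) : chainTime 𝒢 u t (J.map (·.2.1)) ≤ arrival J t := by
  induction J generalizing u t with
  | nil => exact le_rfl
  | cons x J ih =>
    obtain ⟨hx, hJ⟩ := (𝒢.isJourneyFrom_append (J₁ := [x]) (J₂ := J)).1 hJ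
    rw [List.map_cons, arrival_cons]
    exact chainTime_cons_le_iff.2 ⟨_, hx.reaches, ih hJ⟩

lemma exists_journey_of_chainTime_le {u : V} {l : List V} {t b : ℕ}
    (h : chainTime 𝒢 u t l ≤ b) :
    ∃ J, 𝒢.IsJourneyFrom J u t ∧ l ⊆ u :: J.map (·.2.1) ∧ arrival J t ≤ b := by
  induction l generalizing u t with
  | nil => exact ⟨[], 𝒢.isJourneyFrom_nil u t, List.nil_subset _, Nat.cast_le.1 h⟩
  | cons v l ih =>
    obtain ⟨t₂, ⟨J₁, hJ₁, rfl, harr₁⟩, hl⟩ := chainTime_cons_le_iff.1 h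
    obtain ⟨J₂, hJ₂, hsub, harr₂⟩ := ih hl
    refine ⟨J₁ ++ J₂, (𝒢.isJourneyFrom_append).2 ⟨hJ₁, hJ₂.mono harr₁⟩, ?_, ?_⟩
    · have hend := endAt_mem J₁ u
      simp only [List.subset_def, List.map_append, List.mem_cons,
        List.mem_append] at hsub hend ⊢
      grind
    · rw [arrival_append]
      exact (arrival_mono J₂ harr₁).trans harr₂

end ForemostTimes

theorem dmvp_eq_min_over_orderings_general {V : Type} (𝒢 : TVG V) (s : V) :
    sInf {x : ℕ∞ | ∃ J, 𝒢.IsCoveringFrom J s ∧ x = (arrival J 0 : ℕ∞)} =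
    sInf {x : ℕ∞ | ∃ l : List V, (s :: l).Nodup ∧ (∀ v : V, v ∈ s :: l) ∧
      x = chainTime 𝒢 s 0 l} := by
  apply le_antisymm <;> apply ENat.sInf_le_sInf_of_forall_coe_mem
  · rintro b ⟨l, -, hcover, hb⟩
    obtain ⟨J, hJ, hsub, harr⟩ :=
      exists_journey_of_chainTime_le (𝒢 := 𝒢) (t := 0) (b := b) (by rw [Nat.cast_zero, ← hb])
    refine ⟨_, ⟨J, ⟨hJ.1, hJ.2.1, fun v => visits_iff_mem.2 ?_⟩, rfl⟩, Nat.cast_le.2 harr⟩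
    exact List.cons_subset.2 ⟨List.mem_cons_self, hsub⟩ (hcover v)
  · rintro b ⟨J, hJ, hb⟩
    obtain ⟨l, hsub, hnodup, hcover⟩ := List.exists_sublist_nodup_cons_subset s (J.map (·.2.1))
    refine ⟨_, ⟨l, hnodup, fun v => hcover (visits_iff_mem.1 (hJ.2.2 v)), rfl⟩, ?_⟩
    rw [hb, ← Nat.cast_zero]
    exact chainTime_le_of_sublist hsub hJ.isJourneyFrom.chainTime_map_le_arrival

/-- If some covering journey from `s` at time `0` exists, the minimal
arrival time of a covering journey equals the minimum over all orderings
`u_1 = s, u_2, …, u_n` of `V` of `a_n`, where `a_1 = 0` and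
`a_{i+1} = a_i + d^{a_i}_{u_i u_{i+1}}`. -/
theorem dmvp_eq_min_over_orderings {V : Type} [Fintype V] (𝒢 : TVG V) (s : V)
    (hex : ∃ J, 𝒢.IsCoveringFrom J s) :
    sInf {x : ℕ∞ | ∃ J, 𝒢.IsCoveringFrom J s ∧ x = (arrival J 0 : ℕ∞)} =
    sInf {x : ℕ∞ | ∃ l : List V, (s :: l).Nodup ∧ (∀ v : V, v ∈ s :: l) ∧
      x = chainTime 𝒢 s 0 l} :=
  dmvp_eq_min_over_orderings_general 𝒢 s
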